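/- Let X₁, …, Xₙ be independent Poisson trials, X = ∑ᵢ Xᵢ. Let 0 < γ < 1, let μ̂ > 0 be a real number, set β = (log γ)/μ̂ and δ_U = (-2β + √(4β² - 18β))/3. If E[X] ≥ (1+δ_U)·μ̂, then P(X ≤ μ̂) ≤ γ. -/

import Mathlib

/-!
Chernoff's bound for the lower tail of a sum `S` of independent Poisson trials with mean `μ`:
with `t = -log (1 + δ)`, Markov's inequality for `exp (t S)` and `1 + y ≤ exp y` applied to the
mgf of each trial give `P(S ≤ μ̂) ≤ exp ((log (1 + δ) - δ) μ̂)` as soon as `(1 + δ) μ̂ ≤ μ`.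
Comparing `log (1 + δ)` with its `[2/1]` Padé approximant `δ (δ + 6) / (4 δ + 6)` bounds the
exponent by `-3 δ² μ̂ / (4 δ + 6)`, and `δ_U` is exactly the positive root of
`-3 δ² / (4 δ + 6) = log γ / μ̂`.
-/

open MeasureTheory ProbabilityTheory Real

namespace Real

theorem log_one_add_le_pade {x : ℝ} (hx : 0 ≤ x) : log (1 + x) ≤ x * (x + 6) / (4 * x + 6) := by
  set f : ℝ → ℝ := fun y => y * (y + 6) / (4 * y + 6) - log (1 + y)
  set f' : ℝ → ℝ := fun y => ((2 * y + 6) * (4 * y + 6) - y * (y + 6) * 4) / (4 * y + 6) ^ 2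
    - 1 / (1 + y)
  have hf : ∀ y : ℝ, 0 ≤ y → HasDerivAt f (f' y) y := by
    intro y hy
    have hpade := ((hasDerivAt_id y).mul ((hasDerivAt_id y).add_const 6)).div
      (((hasDerivAt_id y).const_mul 4).add_const 6) (by positivity)
    have hlog := ((hasDerivAt_id y).const_add 1).log (by positivity)
    exact (hpade.sub hlog).congr_deriv (by simp only [f', id, Pi.mul_apply]; ring)
  -- `f' y = 4 y (y² + 3 y + 3) / ((4 y + 6)² (1 + y))`
  have hf'_nonneg : ∀ y : ℝ, 0 ≤ y → 0 ≤ f' y := by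
    intro y hy
    simp only [f']
    rw [sub_nonneg, div_le_div_iff₀ (by positivity) (by positivity)]
    nlinarith [mul_nonneg hy (mul_nonneg hy hy)]
  have hmono : MonotoneOn f (Set.Ici 0) := by
    refine monotoneOn_of_hasDerivWithinAt_nonneg (convex_Ici 0)
      (fun y hy => (hf y hy).continuousAt.continuousWithinAt)
      (fun y hy => (hf y (interior_subset hy)).hasDerivWithinAt) ?_
    rw [interior_Ici]
    exact fun y hy => hf'_nonneg y (le_of_lt hy)
  have := hmono Set.self_mem_Ici hx hx
  simp only [f, mul_zero, add_zero, log_one, sub_zero] at this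
  linarith

end Real

noncomputable def upperConfRadius (β : ℝ) : ℝ := (-2 * β + √(4 * β ^ 2 - 18 * β)) / 3

theorem upperConfRadius_pos {β : ℝ} (hβ : β < 0) : 0 < upperConfRadius β := by
  have hsq : 2 * β < √(4 * β ^ 2 - 18 * β) := lt_of_lt_of_le (by linarith) (sqrt_nonneg _)
  rw [upperConfRadius]
  linarith

theorem upperConfRadius_isRoot {β : ℝ} (hβ : β < 0) :
    3 * upperConfRadius β ^ 2 + 4 * β * upperConfRadius β + 6 * β = 0 := by
  have hsq := sq_sqrt (show 0 ≤ 4 * β ^ 2 - 18 * β by nlinarith)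
  have : √(4 * β ^ 2 - 18 * β) = 3 * upperConfRadius β + 2 * β := by rw [upperConfRadius]; ring
  rw [this] at hsq
  nlinarith

theorem log_one_add_upperConfRadius_sub_le {β : ℝ} (hβ : β < 0) :
    log (1 + upperConfRadius β) - upperConfRadius β ≤ β := by
  have hδ0 := upperConfRadius_pos hβ
  have hroot := upperConfRadius_isRoot hβ
  have hpade : upperConfRadius β * (upperConfRadius β + 6) / (4 * upperConfRadius β + 6)
      - upperConfRadius β = β := by
    field_simp
    linarith
  linarith [log_one_add_le_pade hδ0.le]

namespace ProbabilityTheory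

variable {Ω ι : Type*} [MeasurableSpace Ω] {μ : Measure Ω}

theorem integrable_of_zero_or_one [IsFiniteMeasure μ] {X : Ω → ℝ} (hX : AEMeasurable X μ)
    (h01 : ∀ ω, X ω = 0 ∨ X ω = 1) : Integrable X μ :=
  .of_mem_Icc 0 1 hX (.of_forall fun ω => by rcases h01 ω with h | h <;> simp [h])

theorem mgf_of_zero_or_one [IsProbabilityMeasure μ] {X : Ω → ℝ} (hX : AEMeasurable X μ)
    (h01 : ∀ ω, X ω = 0 ∨ X ω = 1) (t : ℝ) : mgf X μ t = 1 + (exp t - 1) * μ[X] := by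
  have hexp : ∀ ω, exp (t * X ω) = 1 + (exp t - 1) * X ω := by
    intro ω
    rcases h01 ω with h | h <;> simp [h]
  simp only [mgf, hexp]
  rw [integral_add (integrable_const 1) ((integrable_of_zero_or_one hX h01).const_mul _),
    integral_const_mul]
  simp

theorem mgf_le_exp_of_zero_or_one [IsProbabilityMeasure μ] {X : Ω → ℝ} (hX : AEMeasurable X μ)
    (h01 : ∀ ω, X ω = 0 ∨ X ω = 1) (t : ℝ) : mgf X μ t ≤ exp ((exp t - 1) * μ[X]) := by
  rw [mgf_of_zero_or_one hX h01]
  linarith [add_one_le_exp ((exp t - 1) * μ[X])]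

theorem iIndepFun.mgf_sum_le_exp_of_zero_or_one {X : ι → Ω → ℝ} (hmeas : ∀ i, Measurable (X i))
    (hindep : iIndepFun X μ) (h01 : ∀ i ω, X i ω = 0 ∨ X i ω = 1) (s : Finset ι) (t : ℝ) :
    mgf (∑ i ∈ s, X i) μ t ≤ exp ((exp t - 1) * ∑ i ∈ s, μ[X i]) := by
  have := hindep.isProbabilityMeasure
  rw [hindep.mgf_sum hmeas, Finset.mul_sum, exp_sum]
  exact Finset.prod_le_prod (fun _ _ => mgf_nonneg)
    fun i _ => mgf_le_exp_of_zero_or_one (hmeas i).aemeasurable (h01 i) t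

theorem iIndepFun.measureReal_sum_le_le_of_zero_or_one {X : ι → Ω → ℝ}
    (hmeas : ∀ i, Measurable (X i)) (hindep : iIndepFun X μ) (h01 : ∀ i ω, X i ω = 0 ∨ X i ω = 1)
    (s : Finset ι) {δ a : ℝ} (hδ : 0 ≤ δ) (hmean : (1 + δ) * a ≤ ∫ ω, (∑ i ∈ s, X i ω) ∂μ) :
    μ.real {ω | ∑ i ∈ s, X i ω ≤ a} ≤ exp ((log (1 + δ) - δ) * a) := by
  have := hindep.isProbabilityMeasure
  have hXnn : ∀ i ω, 0 ≤ X i ω := fun i ω => by rcases h01 i ω with h | h <;> simp [h]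
  rw [integral_finsetSum s fun i _ =>
    integrable_of_zero_or_one (hmeas i).aemeasurable (h01 i)] at hmean
  set t := -log (1 + δ)
  have ht : t ≤ 0 := neg_nonpos.mpr (log_nonneg (by linarith))
  have hexp_t : exp t = (1 + δ)⁻¹ := by rw [exp_neg, exp_log (by linarith)]
  have hint : Integrable (fun ω => exp (t * (∑ i ∈ s, X i) ω)) μ := by
    refine .of_mem_Icc 0 1 (by fun_prop) (.of_forall fun ω => ⟨(exp_pos _).le, ?_⟩)
    rw [exp_le_one_iff, Finset.sum_apply]
    exact mul_nonpos_of_nonpos_of_nonneg ht (Finset.sum_nonneg fun i _ => hXnn i ω)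
  have hdrift : (exp t - 1) * ∑ i ∈ s, μ[X i] ≤ -δ * a := by
    have hcoef : exp t - 1 = -δ / (1 + δ) := by rw [hexp_t]; field_simp; ring
    rw [hcoef]
    calc -δ / (1 + δ) * ∑ i ∈ s, μ[X i] ≤ -δ / (1 + δ) * ((1 + δ) * a) :=
          mul_le_mul_of_nonpos_left hmean
            (div_nonpos_of_nonpos_of_nonneg (by linarith) (by linarith))
      _ = -δ * a := by field_simp
  calc μ.real {ω | ∑ i ∈ s, X i ω ≤ a}
      = μ.real {ω | (∑ i ∈ s, X i) ω ≤ a} := by simp only [Finset.sum_apply]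
    _ ≤ exp (-t * a) * mgf (∑ i ∈ s, X i) μ t := measure_le_le_exp_mul_mgf a ht hint
    _ ≤ exp (-t * a) * exp ((exp t - 1) * ∑ i ∈ s, μ[X i]) := by
        gcongr
        exact hindep.mgf_sum_le_exp_of_zero_or_one hmeas h01 s t
    _ ≤ exp ((log (1 + δ) - δ) * a) := by
        rw [← exp_add]
        gcongr
        linarith

end ProbabilityTheory

theorem conf_upper_bound_general {Ω : Type*} [MeasureSpace Ω]
    (n : ℕ) (X : Fin n → Ω → ℝ)
    (hmeas : ∀ i, Measurable (X i))
    (hindep : iIndepFun X ℙ)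
    (h01 : ∀ i ω, X i ω = 0 ∨ X i ω = 1)
    (γ μhat : ℝ) (hγ0 : 0 < γ) (hγ1 : γ < 1) (hμhat : 0 < μhat)
    (β δU : ℝ) (hβ : β = Real.log γ / μhat)
    (hδU : δU = (-2 * β + Real.sqrt (4 * β ^ 2 - 18 * β)) / 3)
    (hE : (1 + δU) * μhat ≤ ∫ ω, (∑ i, X i ω) ∂ℙ) :
    (ℙ {ω | ∑ i, X i ω ≤ μhat}).toReal ≤ γ := by
  have hβ0 : β < 0 := hβ ▸ div_neg_of_neg_of_pos (log_neg hγ0 hγ1) hμhat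
  obtain rfl : δU = upperConfRadius β := hδU
  calc (ℙ {ω | ∑ i, X i ω ≤ μhat}).toReal
      ≤ exp ((log (1 + upperConfRadius β) - upperConfRadius β) * μhat) :=
        hindep.measureReal_sum_le_le_of_zero_or_one hmeas h01 Finset.univ
          (upperConfRadius_pos hβ0).le hE
    _ ≤ exp (β * μhat) := by
        gcongr
        exact log_one_add_upperConfRadius_sub_le hβ0
    _ = γ := by rw [hβ, div_mul_cancel₀ _ hμhat.ne', exp_log hγ0]

theorem conf_upper_bound {Ω : Type*} [MeasureSpace Ω]
    [IsProbabilityMeasure (ℙ : Measure Ω)]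
    (n : ℕ) (X : Fin n → Ω → ℝ) (p : Fin n → ℝ)
    (hmeas : ∀ i, Measurable (X i))
    (hindep : iIndepFun X ℙ)
    (h01 : ∀ i ω, X i ω = 0 ∨ X i ω = 1)
    (hp : ∀ i, (ℙ {ω | X i ω = 1}).toReal = p i)
    (γ μhat : ℝ) (hγ0 : 0 < γ) (hγ1 : γ < 1) (hμhat : 0 < μhat)
    (β δU : ℝ) (hβ : β = Real.log γ / μhat)
    (hδU : δU = (-2 * β + Real.sqrt (4 * β ^ 2 - 18 * β)) / 3)
    (hE : (1 + δU) * μhat ≤ ∫ ω, (∑ i, X i ω) ∂ℙ) :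
    (ℙ {ω | ∑ i, X i ω ≤ μhat}).toReal ≤ γ :=
  conf_upper_bound_general n X hmeas hindep h01 γ μhat hγ0 hγ1 hμhat β δU hβ hδU hE
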